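/- Let R be a commutative ring and l ≥ 2. Then U(2l,R) ⊆ Ep(2l,R) and U⁻(2l,R) ⊆ Ep(2l,R): every symplectic matrix whose lower-left (resp. upper-right) l×l block is zero and whose upper-left block is upper (resp. lower) unitriangular is a product of the elementary symplectic generators. -/

import Mathlib

open Matrix

/-- A vector is *unimodular* if its entries generate the unit ideal of `R`. -/
def Unimodular (R : Type*) [CommRing R] {ι : Type*} (v : ι → R) : Prop :=
  Ideal.span (Set.range v) = ⊤

/-- `sr(R) ≤ k`: for every `m ≥ k`, every unimodular column of height `m + 1` is stable. -/
def SRleq (R : Type*) [CommRing R] (k : ℕ) : Prop :=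
  ∀ m : ℕ, k ≤ m → ∀ a : Fin (m + 1) → R, Unimodular R a →
    ∃ b : Fin m → R,
      Unimodular R fun i : Fin m => a i.castSucc + b i * a (Fin.last m)

/-- `𝔏(a)`: the intersection of all maximal ideals containing every entry of `a`
(`⊤ = R` if there is no such maximal ideal). -/
def Lideal (R : Type*) [CommRing R] {ι : Type*} (a : ι → R) : Ideal R :=
  sInf {I : Ideal R | I.IsMaximal ∧ ∀ i, a i ∈ I}

/-- `asr(R) ≤ k`: the absolute stable rank condition. -/
def ASRleq (R : Type*) [CommRing R] (k : ℕ) : Prop :=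
  ∀ m : ℕ, k ≤ m → ∀ a : Fin (m + 1) → R,
    ∃ b : Fin m → R,
      Lideal R (fun i : Fin m => a i.castSucc + b i * a (Fin.last m)) = Lideal R a

/-- The set of elementary transvections `1 + t·E i j`, `i ≠ j`, viewed inside `GL`. -/
def ElemGen (R : Type*) [CommRing R] (ι : Type*) [Fintype ι] [DecidableEq ι] :
    Set (Matrix ι ι R)ˣ :=
  {u | ∃ i j : ι, i ≠ j ∧ ∃ t : R, (u : Matrix ι ι R) = 1 + Matrix.single i j t}

/-- The elementary subgroup `E(ι, R) ≤ GL(ι, R)`. -/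
def Esubgroup (R : Type*) [CommRing R] (ι : Type*) [Fintype ι] [DecidableEq ι] :
    Subgroup (Matrix ι ι R)ˣ :=
  Subgroup.closure (ElemGen R ι)

/-- Generators of `Ẽ(n, R)`: elementary transvections, mixed commutators `[a, g]` with
`a ∈ E(n,R)`, `g ∈ GL(n,R)`, and elements `(1 + xy)(1 + yx)⁻¹` with `y = diag(ξ,1,…,1)`. -/
def EtildeGen (R : Type*) [CommRing R] (n : ℕ) : Set (Matrix (Fin n) (Fin n) R)ˣ :=
  ElemGen R (Fin n) ∪
  {w | ∃ a ∈ Esubgroup R (Fin n), ∃ g : (Matrix (Fin n) (Fin n) R)ˣ,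
        w = a * g * a⁻¹ * g⁻¹} ∪
  {w | ∃ (ξ : R) (x : Matrix (Fin n) (Fin n) R) (p q : (Matrix (Fin n) (Fin n) R)ˣ),
        (p : Matrix (Fin n) (Fin n) R)
          = 1 + x * Matrix.diagonal (fun i : Fin n => if (i : ℕ) = 0 then ξ else 1) ∧
        (q : Matrix (Fin n) (Fin n) R)
          = 1 + Matrix.diagonal (fun i : Fin n => if (i : ℕ) = 0 then ξ else 1) * x ∧
        w = p * q⁻¹}

/-- `Ẽ(n, R)`: the normal closure in `GL(n, R)` of the subgroup generated by `EtildeGen`. -/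
def Etilde (R : Type*) [CommRing R] (n : ℕ) : Subgroup (Matrix (Fin n) (Fin n) R)ˣ :=
  Subgroup.normalClosure (EtildeGen R n)

/-- Stabilization `GL(n,R) → GL(n+1,R)`, `g ↦ diag(g, 1)`. -/
def stabGL (R : Type*) [CommRing R] {n : ℕ} (g : (Matrix (Fin n) (Fin n) R)ˣ) :
    (Matrix (Fin (n + 1)) (Fin (n + 1)) R)ˣ where
  val := (fromBlocks g.val 0 0 (1 : Matrix (Fin 1) (Fin 1) R)).submatrix
      finSumFinEquiv.symm finSumFinEquiv.symm
  inv := (fromBlocks g.inv 0 0 (1 : Matrix (Fin 1) (Fin 1) R)).submatrix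
      finSumFinEquiv.symm finSumFinEquiv.symm
  val_inv := by
    rw [Matrix.submatrix_mul_equiv, Matrix.fromBlocks_multiply]
    simp [g.val_inv]
  inv_val := by
    rw [Matrix.submatrix_mul_equiv, Matrix.fromBlocks_multiply]
    simp [g.inv_val]

/-- Generators of the elementary symplectic group, with indices restricted to `S`. -/
def spGen (R : Type*) [CommRing R] {ι : Type*} [DecidableEq ι] (S : Set ι) :
    Set (Matrix (ι ⊕ ι) (ι ⊕ ι) R) :=
  {x | ∃ t : R,
    (∃ i ∈ S, x = 1 + Matrix.single (Sum.inl i) (Sum.inr i) t) ∨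
    (∃ i ∈ S, x = 1 + Matrix.single (Sum.inr i) (Sum.inl i) t) ∨
    (∃ i ∈ S, ∃ j ∈ S, i ≠ j ∧
      x = 1 + (Matrix.single (Sum.inl i) (Sum.inl j) t
             - Matrix.single (Sum.inr j) (Sum.inr i) t)) ∨
    (∃ i ∈ S, ∃ j ∈ S, i ≠ j ∧
      x = 1 + (Matrix.single (Sum.inl i) (Sum.inr j) t
             + Matrix.single (Sum.inl j) (Sum.inr i) t)) ∨
    (∃ i ∈ S, ∃ j ∈ S, i ≠ j ∧
      x = 1 + (Matrix.single (Sum.inr i) (Sum.inl j) t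
             + Matrix.single (Sum.inr j) (Sum.inl i) t))}

/-- The elementary symplectic group `Ep` (with indices restricted to `S`),
as a subgroup of `GL(ι ⊕ ι, R)`. -/
def EpS (R : Type*) [CommRing R] (ι : Type*) [Fintype ι] [DecidableEq ι] (S : Set ι) :
    Subgroup (Matrix (ι ⊕ ι) (ι ⊕ ι) R)ˣ :=
  Subgroup.closure
    {u : (Matrix (ι ⊕ ι) (ι ⊕ ι) R)ˣ | (u : Matrix (ι ⊕ ι) (ι ⊕ ι) R) ∈ spGen R S}

/-- The matrix `J = (0 I; -I 0)`. -/
def Jmat (R : Type*) [CommRing R] (ι : Type*) [DecidableEq ι] : Matrix (ι ⊕ ι) (ι ⊕ ι) R :=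
  fromBlocks 0 1 (-1) 0

/-- `x` is symplectic: `xᵀ J x = J`. -/
def IsSymplectic (R : Type*) [CommRing R] {ι : Type*} [Fintype ι] [DecidableEq ι]
    (x : Matrix (ι ⊕ ι) (ι ⊕ ι) R) : Prop :=
  xᵀ * Jmat R ι * x = Jmat R ι

/-- The hyperbolic embedding `H(g) = diag(g, (gᵀ)⁻¹)`. -/
def Hyp (R : Type*) [CommRing R] {ι : Type*} [Fintype ι] [DecidableEq ι]
    (g : (Matrix ι ι R)ˣ) : (Matrix (ι ⊕ ι) (ι ⊕ ι) R)ˣ where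
  val := fromBlocks g.val 0 0 g.invᵀ
  inv := fromBlocks g.inv 0 0 g.valᵀ
  val_inv := by
    rw [Matrix.fromBlocks_multiply]
    simp [← Matrix.transpose_mul, g.val_inv, g.inv_val]
  inv_val := by
    rw [Matrix.fromBlocks_multiply]
    simp [← Matrix.transpose_mul, g.val_inv, g.inv_val]

/-- `diag(1, g)` as an element of `GL(l + 1, R)`. -/
def diagOneGL (R : Type*) [CommRing R] {l : ℕ} (g : (Matrix (Fin l) (Fin l) R)ˣ) :
    (Matrix (Fin (l + 1)) (Fin (l + 1)) R)ˣ where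
  val := (fromBlocks (1 : Matrix (Fin 1) (Fin 1) R) 0 0 g.val).submatrix
      (finSumFinEquiv.trans (finCongr (Nat.add_comm 1 l))).symm
      (finSumFinEquiv.trans (finCongr (Nat.add_comm 1 l))).symm
  inv := (fromBlocks (1 : Matrix (Fin 1) (Fin 1) R) 0 0 g.inv).submatrix
      (finSumFinEquiv.trans (finCongr (Nat.add_comm 1 l))).symm
      (finSumFinEquiv.trans (finCongr (Nat.add_comm 1 l))).symm
  val_inv := by
    rw [Matrix.submatrix_mul_equiv, Matrix.fromBlocks_multiply]
    simp [g.val_inv]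
    exact Matrix.submatrix_one_equiv ((finCongr _).trans finSumFinEquiv.symm)
  inv_val := by
    rw [Matrix.submatrix_mul_equiv, Matrix.fromBlocks_multiply]
    simp [g.inv_val]
    exact Matrix.submatrix_one_equiv ((finCongr _).trans finSumFinEquiv.symm)

/-- `U(2l, R)`: symplectic matrices with zero lower-left block and
upper unitriangular upper-left block. -/
def Upos (R : Type*) [CommRing R] (l : ℕ) :
    Set (Matrix (Fin l ⊕ Fin l) (Fin l ⊕ Fin l) R) :=
  {x | IsSymplectic R x ∧ (∀ i j, x (Sum.inr i) (Sum.inl j) = 0) ∧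
       (∀ i j : Fin l, j < i → x (Sum.inl i) (Sum.inl j) = 0) ∧
       (∀ i, x (Sum.inl i) (Sum.inl i) = 1)}

/-- `U⁻(2l, R)`: symplectic matrices with zero upper-right block and
lower unitriangular upper-left block. -/
def Uneg (R : Type*) [CommRing R] (l : ℕ) :
    Set (Matrix (Fin l ⊕ Fin l) (Fin l ⊕ Fin l) R) :=
  {x | IsSymplectic R x ∧ (∀ i j, x (Sum.inl i) (Sum.inr j) = 0) ∧
       (∀ i j : Fin l, i < j → x (Sum.inl i) (Sum.inl j) = 0) ∧
       (∀ i, x (Sum.inl i) (Sum.inl i) = 1)}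

section Aux
set_option linter.unusedSectionVars false
variable {R : Type*} [CommRing R] {ι : Type*} [Fintype ι] [DecidableEq ι]

/-- Unit from a square-zero matrix. -/
def sqU (N : Matrix ι ι R) (h : N * N = 0) : (Matrix ι ι R)ˣ where
  val := 1 + N
  inv := 1 - N
  val_inv := by rw [mul_sub, mul_one, add_mul, one_mul, h, add_zero, add_sub_cancel_right]
  inv_val := by rw [sub_mul, one_mul, mul_add, mul_one, h, add_zero, add_sub_cancel_right]

lemma blk_ll (i j : ι) (t : R) :
    Matrix.single (Sum.inl i : ι ⊕ ι) (Sum.inl j : ι ⊕ ι) t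
      = fromBlocks (Matrix.single i j t) 0 0 (0 : Matrix ι ι R) := by
  ext (a | a) (b | b) <;> simp [Matrix.single]

lemma blk_lr (i j : ι) (t : R) :
    Matrix.single (Sum.inl i : ι ⊕ ι) (Sum.inr j : ι ⊕ ι) t
      = fromBlocks 0 (Matrix.single i j t) 0 (0 : Matrix ι ι R) := by
  ext (a | a) (b | b) <;> simp [Matrix.single]

lemma blk_rl (i j : ι) (t : R) :
    Matrix.single (Sum.inr i : ι ⊕ ι) (Sum.inl j : ι ⊕ ι) t
      = fromBlocks 0 0 (Matrix.single i j t) (0 : Matrix ι ι R) := by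
  ext (a | a) (b | b) <;> simp [Matrix.single]

lemma blk_rr (i j : ι) (t : R) :
    Matrix.single (Sum.inr i : ι ⊕ ι) (Sum.inr j : ι ⊕ ι) t
      = fromBlocks 0 0 0 (Matrix.single i j t) := by
  ext (a | a) (b | b) <;> simp [Matrix.single]

open scoped Classical in
lemma mem_E_of_tri {l : ℕ} (f : Fin l → ℕ) (hf : Function.Injective f) :
    ∀ (n : ℕ) (A : Matrix (Fin l) (Fin l) R),
      (∀ i j, f j < f i → A i j = 0) → (∀ i, A i i = 1) →
      (Finset.univ.filter
        (fun p : Fin l × Fin l => p.1 ≠ p.2 ∧ A p.1 p.2 ≠ 0)).card ≤ n →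
      ∃ u ∈ Esubgroup R (Fin l), (u : Matrix (Fin l) (Fin l) R) = A := by
  classical
  intro n
  induction n with
  | zero =>
    intro A htri hdiag hcard
    have hz : ∀ i j : Fin l, i ≠ j → A i j = 0 := by
      intro i j hij
      by_contra h
      have hmem : (i, j) ∈ Finset.univ.filter
          (fun p : Fin l × Fin l => p.1 ≠ p.2 ∧ A p.1 p.2 ≠ 0) := by
        simp [hij, h]
      have := Finset.card_pos.mpr ⟨(i, j), hmem⟩
      omega
    refine ⟨1, one_mem _, ?_⟩
    ext i j
    by_cases h : i = j
    · subst h; simp [hdiag]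
    · simp [Matrix.one_apply, h, hz i j h]
  | succ n ih =>
    intro A htri hdiag hcard
    set T := Finset.univ.filter
      (fun p : Fin l × Fin l => p.1 ≠ p.2 ∧ A p.1 p.2 ≠ 0) with hT
    rcases T.eq_empty_or_nonempty with hE | hNe
    · exact ih A htri hdiag (by rw [← hT, hE]; simp)
    · obtain ⟨p0, hp0T, hmin⟩ := T.exists_min_image (fun p => f p.2) hNe
      obtain ⟨i, j⟩ := p0
      have hij : i ≠ j ∧ A i j ≠ 0 := by simpa [hT] using hp0T
      have hfij : f i < f j := by
        rcases lt_trichotomy (f i) (f j) with h | h | h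
        · exact h
        · exact absurd (hf h) hij.1
        · exact absurd (htri i j h) hij.2
      set t := A i j with ht
      have hE2 : Matrix.single i j t * Matrix.single i j t = 0 :=
        Matrix.single_mul_single_of_ne (c := t) i j i (Ne.symm hij.1) t
      set A' := A * (1 - Matrix.single i j t) with hA'
      have key : ∀ r c, A' r c = if c = j then A r j - A r i * t else A r c := by
        intro r c
        by_cases h : c = j
        · subst h
          simp [hA', mul_sub, Matrix.sub_apply]
        · simp [hA', mul_sub, Matrix.sub_apply, h]
      have hAri : ∀ r, r ≠ i → A r i = 0 := by
        intro r hr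
        by_contra h
        have hmem : (r, i) ∈ T := by simp [hT, hr, h]
        have := hmin (r, i) hmem
        simp only at this
        omega
      have hA'eq : ∀ r c, ¬(r = i ∧ c = j) → A' r c = A r c := by
        intro r c h
        rw [key]
        by_cases hc : c = j
        · subst hc
          have hr : r ≠ i := fun hri => h ⟨hri, rfl⟩
          rw [hAri r hr]
          simp
        · simp [hc]
      have hA'ij : A' i j = 0 := by
        rw [key]
        simp [hdiag, ht]
      have htri' : ∀ r c, f c < f r → A' r c = 0 := by
        intro r c h
        by_cases hrc : r = i ∧ c = j
        · obtain ⟨rfl, rfl⟩ := hrc; exact hA'ij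
        · rw [hA'eq r c hrc]; exact htri r c h
      have hdiag' : ∀ c, A' c c = 1 := by
        intro c
        have : ¬(c = i ∧ c = j) := fun ⟨h1, h2⟩ => hij.1 (h1 ▸ h2)
        rw [hA'eq c c this]; exact hdiag c
      have hsub : (Finset.univ.filter
          (fun p : Fin l × Fin l => p.1 ≠ p.2 ∧ A' p.1 p.2 ≠ 0)) ⊆ T.erase (i, j) := by
        intro q hq
        simp only [Finset.mem_filter, Finset.mem_univ, true_and] at hq
        have hqne : q ≠ (i, j) := by
          rintro rfl
          exact hq.2 hA'ij
        refine Finset.mem_erase.mpr ⟨hqne, ?_⟩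
        have : ¬(q.1 = i ∧ q.2 = j) := by
          intro ⟨h1, h2⟩
          exact hqne (Prod.ext h1 h2)
        rw [hA'eq q.1 q.2 this] at hq
        simp [hT, hq.1, hq.2]
      have hcard' : (Finset.univ.filter
          (fun p : Fin l × Fin l => p.1 ≠ p.2 ∧ A' p.1 p.2 ≠ 0)).card ≤ n := by
        have h1 := Finset.card_le_card hsub
        have h2 : (T.erase (i, j)).card = T.card - 1 :=
          Finset.card_erase_of_mem hp0T
        omega
      obtain ⟨u', hu'mem, hu'val⟩ := ih A' htri' hdiag' hcard'
      refine ⟨u' * sqU (Matrix.single i j t) hE2,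
        mul_mem hu'mem (Subgroup.subset_closure ⟨i, j, hij.1, t, rfl⟩), ?_⟩
      have hone : (1 - Matrix.single i j t) * (1 + Matrix.single i j t) = 1 :=
        (sqU (Matrix.single i j t) hE2).inv_val
      calc (u' * sqU (Matrix.single i j t) hE2 : (Matrix (Fin l) (Fin l) R)ˣ).val
          = A' * (1 + Matrix.single i j t) := by
            rw [Units.val_mul, hu'val]; rfl
        _ = A * ((1 - Matrix.single i j t) * (1 + Matrix.single i j t)) := by
            rw [hA', mul_assoc]
        _ = A := by rw [hone, mul_one]

end Aux
section Aux2
set_option linter.unusedSectionVars false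
variable {R : Type*} [CommRing R] {ι : Type*} [Fintype ι] [DecidableEq ι]

lemma Hyp_one : Hyp R (1 : (Matrix ι ι R)ˣ) = 1 := by
  refine Units.ext ?_
  show fromBlocks (1 : Matrix ι ι R) 0 0 ((1 : Matrix ι ι R)ᵀ) = 1
  rw [Matrix.transpose_one, Matrix.fromBlocks_one]

lemma Hyp_mul (u v : (Matrix ι ι R)ˣ) : Hyp R (u * v) = Hyp R u * Hyp R v := by
  refine Units.ext ?_
  show fromBlocks (u.val * v.val) 0 0 ((v.inv * u.inv)ᵀ)
      = fromBlocks u.val 0 0 (u.invᵀ) * fromBlocks v.val 0 0 (v.invᵀ)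
  rw [Matrix.fromBlocks_multiply]
  simp [Matrix.transpose_mul]

lemma Hyp_inv (u : (Matrix ι ι R)ˣ) : Hyp R u⁻¹ = (Hyp R u)⁻¹ := by
  have h : Hyp R u * Hyp R u⁻¹ = 1 := by
    rw [← Hyp_mul, mul_inv_cancel, Hyp_one]
  exact eq_inv_of_mul_eq_one_right h

lemma Hyp_transvection (i j : ι) (hij : i ≠ j) (t : R)
    (h2 : Matrix.single i j t * Matrix.single i j t = 0) :
    ((Hyp R (sqU (Matrix.single i j t) h2) : (Matrix (ι ⊕ ι) (ι ⊕ ι) R)ˣ) :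
        Matrix (ι ⊕ ι) (ι ⊕ ι) R)
      = 1 + (Matrix.single (Sum.inl i : ι ⊕ ι) (Sum.inl j : ι ⊕ ι) t
           - Matrix.single (Sum.inr j : ι ⊕ ι) (Sum.inr i : ι ⊕ ι) t) := by
  show fromBlocks (1 + Matrix.single i j t) 0 0
      ((1 - Matrix.single i j t)ᵀ) = _
  ext (a | a) (b | b) <;>
    simp [Matrix.single, Matrix.one_apply, Matrix.transpose_apply, and_comm, sub_eq_add_neg]

lemma Hyp_mem {l : ℕ} (u : (Matrix (Fin l) (Fin l) R)ˣ) (hu : u ∈ Esubgroup R (Fin l)) :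
    Hyp R u ∈ EpS R (Fin l) Set.univ := by
  induction hu using Subgroup.closure_induction with
  | mem x hx =>
    obtain ⟨i, j, hij, t, hx⟩ := hx
    have h2 : Matrix.single i j t * Matrix.single i j t = 0 :=
      Matrix.single_mul_single_of_ne (c := t) i j i
        (Ne.symm hij) t
    have hxe : x = sqU (Matrix.single i j t) h2 := Units.ext hx
    rw [hxe]
    refine Subgroup.subset_closure ?_
    show ((Hyp R (sqU (Matrix.single i j t) h2)) :
      Matrix (Fin l ⊕ Fin l) (Fin l ⊕ Fin l) R) ∈ spGen R Set.univ
    rw [Hyp_transvection i j hij t h2]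
    exact ⟨t, Or.inr (Or.inr (Or.inl
      ⟨i, Set.mem_univ i, j, Set.mem_univ j, hij, rfl⟩))⟩
  | one => rw [Hyp_one]; exact one_mem _
  | mul x y hx hy ihx ihy => rw [Hyp_mul]; exact mul_mem ihx ihy
  | inv x hx ihx => rw [Hyp_inv]; exact inv_mem ihx

end Aux2
section Aux3
set_option linter.unusedSectionVars false
variable {R : Type*} [CommRing R] {ι : Type*} [Fintype ι] [DecidableEq ι]

lemma stdT (i j : ι) (t : R) :
    (Matrix.single i j t)ᵀ = Matrix.single j i t := by
  ext a b
  simp [Matrix.single, and_comm]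

lemma upper_mul_upper (B C : Matrix ι ι R) :
    (fromBlocks 0 B 0 0 : Matrix (ι ⊕ ι) (ι ⊕ ι) R) * fromBlocks 0 C 0 0 = 0 := by
  rw [Matrix.fromBlocks_multiply]
  simp

lemma lower_mul_lower (B C : Matrix ι ι R) :
    (fromBlocks 0 0 B 0 : Matrix (ι ⊕ ι) (ι ⊕ ι) R) * fromBlocks 0 0 C 0 = 0 := by
  rw [Matrix.fromBlocks_multiply]
  simp

def upperU (B : Matrix ι ι R) : (Matrix (ι ⊕ ι) (ι ⊕ ι) R)ˣ :=
  sqU (fromBlocks 0 B 0 0) (upper_mul_upper B B)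

def lowerU (B : Matrix ι ι R) : (Matrix (ι ⊕ ι) (ι ⊕ ι) R)ˣ :=
  sqU (fromBlocks 0 0 B 0) (lower_mul_lower B B)

lemma upperU_val (B : Matrix ι ι R) :
    (upperU B : Matrix (ι ⊕ ι) (ι ⊕ ι) R) = fromBlocks 1 B 0 1 := by
  show 1 + fromBlocks 0 B 0 0 = _
  rw [← Matrix.fromBlocks_one, Matrix.fromBlocks_add]
  simp

lemma lowerU_val (B : Matrix ι ι R) :
    (lowerU B : Matrix (ι ⊕ ι) (ι ⊕ ι) R) = fromBlocks 1 0 B 1 := by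
  show 1 + fromBlocks 0 0 B 0 = _
  rw [← Matrix.fromBlocks_one, Matrix.fromBlocks_add]
  simp

lemma upperU_diag_gen (i : ι) (t : R) :
    (upperU (Matrix.single i i t) : Matrix (ι ⊕ ι) (ι ⊕ ι) R)
      = 1 + Matrix.single (Sum.inl i : ι ⊕ ι) (Sum.inr i : ι ⊕ ι) t := by
  show 1 + fromBlocks 0 (Matrix.single i i t) 0 0 = _
  rw [blk_lr]

lemma lowerU_diag_gen (i : ι) (t : R) :
    (lowerU (Matrix.single i i t) : Matrix (ι ⊕ ι) (ι ⊕ ι) R)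
      = 1 + Matrix.single (Sum.inr i : ι ⊕ ι) (Sum.inl i : ι ⊕ ι) t := by
  show 1 + fromBlocks 0 0 (Matrix.single i i t) 0 = _
  rw [blk_rl]

lemma upperU_offdiag_gen (i j : ι) (t : R) :
    (upperU (Matrix.single i j t + Matrix.single j i t) :
        Matrix (ι ⊕ ι) (ι ⊕ ι) R)
      = 1 + (Matrix.single (Sum.inl i : ι ⊕ ι) (Sum.inr j : ι ⊕ ι) t
           + Matrix.single (Sum.inl j : ι ⊕ ι) (Sum.inr i : ι ⊕ ι) t) := by
  show 1 + fromBlocks 0 (Matrix.single i j t + Matrix.single j i t) 0 0 = _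
  rw [blk_lr, blk_lr, Matrix.fromBlocks_add]
  simp

lemma lowerU_offdiag_gen (i j : ι) (t : R) :
    (lowerU (Matrix.single i j t + Matrix.single j i t) :
        Matrix (ι ⊕ ι) (ι ⊕ ι) R)
      = 1 + (Matrix.single (Sum.inr j : ι ⊕ ι) (Sum.inl i : ι ⊕ ι) t
           + Matrix.single (Sum.inr i : ι ⊕ ι) (Sum.inl j : ι ⊕ ι) t) := by
  show 1 + fromBlocks 0 0 (Matrix.single i j t + Matrix.single j i t) 0 = _
  rw [blk_rl, blk_rl, Matrix.fromBlocks_add]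
  simp [add_comm]

lemma upperU_mul (B C : Matrix ι ι R) : upperU B * upperU C = upperU (B + C) := by
  refine Units.ext ?_
  show (1 + fromBlocks 0 B 0 0) * (1 + fromBlocks 0 C 0 0)
      = 1 + (fromBlocks 0 (B + C) 0 0 : Matrix (ι ⊕ ι) (ι ⊕ ι) R)
  rw [mul_add, mul_one, add_mul, one_mul, upper_mul_upper, add_zero, add_assoc, Matrix.fromBlocks_add]
  simp

lemma lowerU_mul (B C : Matrix ι ι R) : lowerU B * lowerU C = lowerU (B + C) := by
  refine Units.ext ?_
  show (1 + fromBlocks 0 0 B 0) * (1 + fromBlocks 0 0 C 0)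
      = 1 + (fromBlocks 0 0 (B + C) 0 : Matrix (ι ⊕ ι) (ι ⊕ ι) R)
  rw [mul_add, mul_one, add_mul, one_mul, lower_mul_lower, add_zero, add_assoc, Matrix.fromBlocks_add]
  simp

end Aux3
section Aux4
set_option linter.unusedSectionVars false
variable {R : Type*} [CommRing R]

open scoped Classical in
lemma upperS_mem {l : ℕ} :
    ∀ (n : ℕ) (S : Matrix (Fin l) (Fin l) R), Sᵀ = S →
      (Finset.univ.filter (fun p : Fin l × Fin l => S p.1 p.2 ≠ 0)).card ≤ n →
      ∃ u ∈ EpS R (Fin l) Set.univ,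
        (u : Matrix (Fin l ⊕ Fin l) (Fin l ⊕ Fin l) R) = fromBlocks 1 S 0 1 := by
  intro n
  induction n with
  | zero =>
    intro S hS hcard
    have hS0 : S = 0 := by
      ext i j
      simp only [Matrix.zero_apply]
      by_contra h
      have hmem : (i, j) ∈ Finset.univ.filter
          (fun p : Fin l × Fin l => S p.1 p.2 ≠ 0) := by simp [h]
      have := Finset.card_pos.mpr ⟨(i, j), hmem⟩
      omega
    refine ⟨1, one_mem _, ?_⟩
    rw [hS0, Matrix.fromBlocks_one]
    rfl
  | succ n ih =>
    intro S hS hcard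
    rcases (Finset.univ.filter
        (fun p : Fin l × Fin l => S p.1 p.2 ≠ 0)).eq_empty_or_nonempty with hE | hNe
    · exact ih S hS (by rw [hE]; simp)
    · obtain ⟨⟨i, j⟩, hmem⟩ := hNe
      have hij : S i j ≠ 0 := by simpa using hmem
      have hji : S j i = S i j := by
        have h := congrFun (congrFun hS i) j
        simpa [Matrix.transpose_apply] using h
      by_cases hd : i = j
      · subst hd
        set X := Matrix.single i i (S i i) with hX
        have hXT : Xᵀ = X := stdT i i (S i i)
        set S' := S - X with hS'
        have hS'T : S'ᵀ = S' := by rw [hS', Matrix.transpose_sub, hS, hXT]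
        have hS'ii : S' i i = 0 := by simp [hS', hX]
        have hS'eq : ∀ p : Fin l × Fin l, p ≠ (i, i) → S' p.1 p.2 = S p.1 p.2 := by
          intro p hp
          have hne : ¬(i = p.1 ∧ i = p.2) := by
            rintro ⟨h1, h2⟩
            exact hp (Prod.ext h1.symm h2.symm)
          simp [hS', hX, Matrix.single_apply_of_ne (h := hne)]
        have hcard' : (Finset.univ.filter
            (fun p : Fin l × Fin l => S' p.1 p.2 ≠ 0)).card ≤ n := by
          have hsub : (Finset.univ.filter
              (fun p : Fin l × Fin l => S' p.1 p.2 ≠ 0)) ⊆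
              (Finset.univ.filter
                (fun p : Fin l × Fin l => S p.1 p.2 ≠ 0)).erase (i, i) := by
            intro q hq
            simp only [Finset.mem_filter, Finset.mem_univ, true_and] at hq
            have hqne : q ≠ (i, i) := by rintro rfl; exact hq hS'ii
            refine Finset.mem_erase.mpr ⟨hqne, ?_⟩
            rw [hS'eq q hqne] at hq
            simp [hq]
          have h1 := Finset.card_le_card hsub
          have h2 := Finset.card_erase_of_mem hmem
          omega
        obtain ⟨u', hu'mem, hu'val⟩ := ih S' hS'T hcard'
        refine ⟨upperU X * u', mul_mem (Subgroup.subset_closure ?_) hu'mem, ?_⟩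
        · exact ⟨S i i, Or.inl ⟨i, Set.mem_univ i, upperU_diag_gen i (S i i)⟩⟩
        · rw [Units.val_mul, upperU_val, hu'val, Matrix.fromBlocks_multiply]
          simp [hS']
      · set t := S i j with htdef
        set X := Matrix.single i j t + Matrix.single j i t with hX
        have hXT : Xᵀ = X := by rw [hX, Matrix.transpose_add, stdT, stdT, add_comm]
        set S' := S - X with hS'
        have hS'T : S'ᵀ = S' := by rw [hS', Matrix.transpose_sub, hS, hXT]
        have hS'ij : S' i j = 0 := by
          have hne : ¬(j = i ∧ i = j) := by rintro ⟨rfl, _⟩; exact hd rfl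
          simp [hS', hX, Matrix.single_apply_of_ne (h := hne), htdef]
        have hS'ji : S' j i = 0 := by
          have hne : ¬(i = j ∧ j = i) := by rintro ⟨rfl, _⟩; exact hd rfl
          simp [hS', hX, Matrix.single_apply_of_ne (h := hne), hji]
        have hS'eq : ∀ p : Fin l × Fin l, p ≠ (i, j) → p ≠ (j, i) →
            S' p.1 p.2 = S p.1 p.2 := by
          intro p hp1 hp2
          have hne1 : ¬(i = p.1 ∧ j = p.2) := by
            rintro ⟨h1, h2⟩
            exact hp1 (Prod.ext h1.symm h2.symm)
          have hne2 : ¬(j = p.1 ∧ i = p.2) := by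
            rintro ⟨h1, h2⟩
            exact hp2 (Prod.ext h1.symm h2.symm)
          simp [hS', hX, Matrix.single_apply_of_ne (h := hne1),
            Matrix.single_apply_of_ne (h := hne2)]
        have hcard' : (Finset.univ.filter
            (fun p : Fin l × Fin l => S' p.1 p.2 ≠ 0)).card ≤ n := by
          have hsub : (Finset.univ.filter
              (fun p : Fin l × Fin l => S' p.1 p.2 ≠ 0)) ⊆
              (Finset.univ.filter
                (fun p : Fin l × Fin l => S p.1 p.2 ≠ 0)).erase (i, j) := by
            intro q hq
            simp only [Finset.mem_filter, Finset.mem_univ, true_and] at hq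
            have hq1 : q ≠ (i, j) := by rintro rfl; exact hq hS'ij
            have hq2 : q ≠ (j, i) := by rintro rfl; exact hq hS'ji
            refine Finset.mem_erase.mpr ⟨hq1, ?_⟩
            rw [hS'eq q hq1 hq2] at hq
            simp [hq]
          have h1 := Finset.card_le_card hsub
          have h2 := Finset.card_erase_of_mem hmem
          omega
        obtain ⟨u', hu'mem, hu'val⟩ := ih S' hS'T hcard'
        refine ⟨upperU X * u', mul_mem (Subgroup.subset_closure ?_) hu'mem, ?_⟩
        · exact ⟨t, Or.inr (Or.inr (Or.inr (Or.inl
            ⟨i, Set.mem_univ i, j, Set.mem_univ j, hd, upperU_offdiag_gen i j t⟩)))⟩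
        · rw [Units.val_mul, upperU_val, hu'val, Matrix.fromBlocks_multiply]
          simp [hS']

open scoped Classical in
lemma lowerS_mem {l : ℕ} :
    ∀ (n : ℕ) (S : Matrix (Fin l) (Fin l) R), Sᵀ = S →
      (Finset.univ.filter (fun p : Fin l × Fin l => S p.1 p.2 ≠ 0)).card ≤ n →
      ∃ u ∈ EpS R (Fin l) Set.univ,
        (u : Matrix (Fin l ⊕ Fin l) (Fin l ⊕ Fin l) R) = fromBlocks 1 0 S 1 := by
  intro n
  induction n with
  | zero =>
    intro S hS hcard
    have hS0 : S = 0 := by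
      ext i j
      simp only [Matrix.zero_apply]
      by_contra h
      have hmem : (i, j) ∈ Finset.univ.filter
          (fun p : Fin l × Fin l => S p.1 p.2 ≠ 0) := by simp [h]
      have := Finset.card_pos.mpr ⟨(i, j), hmem⟩
      omega
    refine ⟨1, one_mem _, ?_⟩
    rw [hS0, Matrix.fromBlocks_one]
    rfl
  | succ n ih =>
    intro S hS hcard
    rcases (Finset.univ.filter
        (fun p : Fin l × Fin l => S p.1 p.2 ≠ 0)).eq_empty_or_nonempty with hE | hNe
    · exact ih S hS (by rw [hE]; simp)
    · obtain ⟨⟨i, j⟩, hmem⟩ := hNe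
      have hij : S i j ≠ 0 := by simpa using hmem
      have hji : S j i = S i j := by
        have h := congrFun (congrFun hS i) j
        simpa [Matrix.transpose_apply] using h
      by_cases hd : i = j
      · subst hd
        set X := Matrix.single i i (S i i) with hX
        have hXT : Xᵀ = X := stdT i i (S i i)
        set S' := S - X with hS'
        have hS'T : S'ᵀ = S' := by rw [hS', Matrix.transpose_sub, hS, hXT]
        have hS'ii : S' i i = 0 := by simp [hS', hX]
        have hS'eq : ∀ p : Fin l × Fin l, p ≠ (i, i) → S' p.1 p.2 = S p.1 p.2 := by
          intro p hp
          have hne : ¬(i = p.1 ∧ i = p.2) := by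
            rintro ⟨h1, h2⟩
            exact hp (Prod.ext h1.symm h2.symm)
          simp [hS', hX, Matrix.single_apply_of_ne (h := hne)]
        have hcard' : (Finset.univ.filter
            (fun p : Fin l × Fin l => S' p.1 p.2 ≠ 0)).card ≤ n := by
          have hsub : (Finset.univ.filter
              (fun p : Fin l × Fin l => S' p.1 p.2 ≠ 0)) ⊆
              (Finset.univ.filter
                (fun p : Fin l × Fin l => S p.1 p.2 ≠ 0)).erase (i, i) := by
            intro q hq
            simp only [Finset.mem_filter, Finset.mem_univ, true_and] at hq
            have hqne : q ≠ (i, i) := by rintro rfl; exact hq hS'ii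
            refine Finset.mem_erase.mpr ⟨hqne, ?_⟩
            rw [hS'eq q hqne] at hq
            simp [hq]
          have h1 := Finset.card_le_card hsub
          have h2 := Finset.card_erase_of_mem hmem
          omega
        obtain ⟨u', hu'mem, hu'val⟩ := ih S' hS'T hcard'
        refine ⟨lowerU X * u', mul_mem (Subgroup.subset_closure ?_) hu'mem, ?_⟩
        · exact ⟨S i i, Or.inr (Or.inl ⟨i, Set.mem_univ i, lowerU_diag_gen i (S i i)⟩)⟩
        · rw [Units.val_mul, lowerU_val, hu'val, Matrix.fromBlocks_multiply]
          simp [hS']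
      · set t := S i j with htdef
        set X := Matrix.single i j t + Matrix.single j i t with hX
        have hXT : Xᵀ = X := by rw [hX, Matrix.transpose_add, stdT, stdT, add_comm]
        set S' := S - X with hS'
        have hS'T : S'ᵀ = S' := by rw [hS', Matrix.transpose_sub, hS, hXT]
        have hS'ij : S' i j = 0 := by
          have hne : ¬(j = i ∧ i = j) := by rintro ⟨rfl, _⟩; exact hd rfl
          simp [hS', hX, Matrix.single_apply_of_ne (h := hne), htdef]
        have hS'ji : S' j i = 0 := by
          have hne : ¬(i = j ∧ j = i) := by rintro ⟨rfl, _⟩; exact hd rfl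
          simp [hS', hX, Matrix.single_apply_of_ne (h := hne), hji]
        have hS'eq : ∀ p : Fin l × Fin l, p ≠ (i, j) → p ≠ (j, i) →
            S' p.1 p.2 = S p.1 p.2 := by
          intro p hp1 hp2
          have hne1 : ¬(i = p.1 ∧ j = p.2) := by
            rintro ⟨h1, h2⟩
            exact hp1 (Prod.ext h1.symm h2.symm)
          have hne2 : ¬(j = p.1 ∧ i = p.2) := by
            rintro ⟨h1, h2⟩
            exact hp2 (Prod.ext h1.symm h2.symm)
          simp [hS', hX, Matrix.single_apply_of_ne (h := hne1),
            Matrix.single_apply_of_ne (h := hne2)]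
        have hcard' : (Finset.univ.filter
            (fun p : Fin l × Fin l => S' p.1 p.2 ≠ 0)).card ≤ n := by
          have hsub : (Finset.univ.filter
              (fun p : Fin l × Fin l => S' p.1 p.2 ≠ 0)) ⊆
              (Finset.univ.filter
                (fun p : Fin l × Fin l => S p.1 p.2 ≠ 0)).erase (i, j) := by
            intro q hq
            simp only [Finset.mem_filter, Finset.mem_univ, true_and] at hq
            have hq1 : q ≠ (i, j) := by rintro rfl; exact hq hS'ij
            have hq2 : q ≠ (j, i) := by rintro rfl; exact hq hS'ji
            refine Finset.mem_erase.mpr ⟨hq1, ?_⟩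
            rw [hS'eq q hq1 hq2] at hq
            simp [hq]
          have h1 := Finset.card_le_card hsub
          have h2 := Finset.card_erase_of_mem hmem
          omega
        obtain ⟨u', hu'mem, hu'val⟩ := ih S' hS'T hcard'
        refine ⟨lowerU X * u', mul_mem (Subgroup.subset_closure ?_) hu'mem, ?_⟩
        · exact ⟨t, Or.inr (Or.inr (Or.inr (Or.inr
            ⟨j, Set.mem_univ j, i, Set.mem_univ i, Ne.symm hd, lowerU_offdiag_gen i j t⟩)))⟩
        · rw [Units.val_mul, lowerU_val, hu'val, Matrix.fromBlocks_multiply]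
          simp [hS']

end Aux4
/-- For `l ≥ 2`, `U(2l, R) ⊆ Ep(2l, R)` and `U⁻(2l, R) ⊆ Ep(2l, R)`:
every such matrix is a product of elementary symplectic generators. -/
theorem statement11 (R : Type*) [CommRing R] (l : ℕ) (hl : 2 ≤ l) :
    (∀ x ∈ Upos R l, ∃ g ∈ EpS R (Fin l) Set.univ,
      (g : Matrix (Fin l ⊕ Fin l) (Fin l ⊕ Fin l) R) = x) ∧
    (∀ x ∈ Uneg R l, ∃ g ∈ EpS R (Fin l) Set.univ,
      (g : Matrix (Fin l ⊕ Fin l) (Fin l ⊕ Fin l) R) = x) := by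
  classical
  constructor
  · rintro x ⟨hsymp, hC, htri, hdiag⟩
    set A := x.toBlocks₁₁ with hA
    set B := x.toBlocks₁₂ with hB
    set D := x.toBlocks₂₂ with hD
    have hC0 : x.toBlocks₂₁ = 0 := by
      ext i j; exact hC i j
    have hx : x = fromBlocks A B 0 D := by
      rw [hA, hB, hD, ← hC0, Matrix.fromBlocks_toBlocks]
    have hs := hsymp
    unfold IsSymplectic Jmat at hs
    rw [hx, Matrix.fromBlocks_transpose, Matrix.fromBlocks_multiply,
      Matrix.fromBlocks_multiply] at hs
    simp only [Matrix.mul_zero, Matrix.zero_mul, Matrix.mul_one, Matrix.one_mul,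
      add_zero, zero_add, mul_neg, neg_mul, Matrix.transpose_zero, neg_zero,
      mul_one, mul_zero, zero_mul, one_mul] at hs
    rw [Matrix.fromBlocks_inj] at hs
    obtain ⟨h11, h12, h21, h22⟩ := hs
    have hDA : Dᵀ * A = 1 := by
      have := neg_inj.mp h21; exact this
    have hAD : A * Dᵀ = 1 := mul_eq_one_comm.mp hDA
    have hBD : Bᵀ * D = Dᵀ * B := by
      have h := h22
      rw [neg_add_eq_sub, sub_eq_zero] at h
      exact h
    set Aunit : (Matrix (Fin l) (Fin l) R)ˣ := ⟨A, Dᵀ, hAD, hDA⟩ with hAu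
    have htriA : ∀ i j : Fin l, (Fin.val j) < Fin.val i → A i j = 0 := by
      intro i j h
      exact htri i j h
    have hdiagA : ∀ i, A i i = 1 := fun i => hdiag i
    obtain ⟨uA, huAmem, huAval⟩ :=
      mem_E_of_tri (R := R) Fin.val Fin.val_injective
        ((Finset.univ.filter
          (fun p : Fin l × Fin l => p.1 ≠ p.2 ∧ A p.1 p.2 ≠ 0)).card)
        A htriA hdiagA le_rfl
    have huAeq : uA = Aunit := Units.ext (by rw [huAval])
    have hAmem : Aunit ∈ Esubgroup R (Fin l) := huAeq ▸ huAmem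
    have hH : Hyp R Aunit ∈ EpS R (Fin l) Set.univ := Hyp_mem Aunit hAmem
    set S := Dᵀ * B with hSdef
    have hST : Sᵀ = S := by
      rw [hSdef, Matrix.transpose_mul, Matrix.transpose_transpose, hBD]
    obtain ⟨u2, hu2mem, hu2val⟩ :=
      upperS_mem (R := R)
        ((Finset.univ.filter (fun p : Fin l × Fin l => S p.1 p.2 ≠ 0)).card)
        S hST le_rfl
    refine ⟨Hyp R Aunit * u2, mul_mem hH hu2mem, ?_⟩
    rw [Units.val_mul, hu2val]
    show fromBlocks A 0 0 (Dᵀᵀ) * fromBlocks 1 S 0 1 = x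
    rw [Matrix.transpose_transpose, Matrix.fromBlocks_multiply, hx]
    simp only [Matrix.mul_one, Matrix.mul_zero, Matrix.zero_mul, Matrix.one_mul,
      add_zero, zero_add, mul_one, mul_zero, zero_mul, one_mul]
    rw [hSdef, ← mul_assoc, hAD, one_mul]
  · rintro x ⟨hsymp, hB, htri, hdiag⟩
    set A := x.toBlocks₁₁ with hA
    set C := x.toBlocks₂₁ with hC
    set D := x.toBlocks₂₂ with hD
    have hB0 : x.toBlocks₁₂ = 0 := by
      ext i j; exact hB i j
    have hx : x = fromBlocks A 0 C D := by
      rw [hA, hC, hD, ← hB0, Matrix.fromBlocks_toBlocks]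
    have hs := hsymp
    unfold IsSymplectic Jmat at hs
    rw [hx, Matrix.fromBlocks_transpose, Matrix.fromBlocks_multiply,
      Matrix.fromBlocks_multiply] at hs
    simp only [Matrix.mul_zero, Matrix.zero_mul, Matrix.mul_one, Matrix.one_mul,
      add_zero, zero_add, mul_neg, neg_mul, Matrix.transpose_zero, neg_zero,
      mul_one, mul_zero, zero_mul, one_mul] at hs
    rw [Matrix.fromBlocks_inj] at hs
    obtain ⟨h11, h12, h21, h22⟩ := hs
    have hDA : Dᵀ * A = 1 := neg_inj.mp h21
    have hAD : A * Dᵀ = 1 := mul_eq_one_comm.mp hDA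
    have hCA : Aᵀ * C = Cᵀ * A := by
      have h := h11
      rw [neg_add_eq_sub, sub_eq_zero] at h
      exact h
    set Aunit : (Matrix (Fin l) (Fin l) R)ˣ := ⟨A, Dᵀ, hAD, hDA⟩ with hAu
    have hfinj : Function.Injective (fun i : Fin l => l - Fin.val i) := by
      intro a b h
      simp only at h
      have ha := a.isLt
      have hb := b.isLt
      exact Fin.ext (by omega)
    have htriA : ∀ i j : Fin l, (l - Fin.val j) < (l - Fin.val i) → A i j = 0 := by
      intro i j h
      have hi := i.isLt
      have hj := j.isLt
      exact htri i j (by omega)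
    have hdiagA : ∀ i, A i i = 1 := fun i => hdiag i
    obtain ⟨uA, huAmem, huAval⟩ :=
      mem_E_of_tri (R := R) (fun i : Fin l => l - Fin.val i) hfinj
        ((Finset.univ.filter
          (fun p : Fin l × Fin l => p.1 ≠ p.2 ∧ A p.1 p.2 ≠ 0)).card)
        A htriA hdiagA le_rfl
    have huAeq : uA = Aunit := Units.ext (by rw [huAval])
    have hAmem : Aunit ∈ Esubgroup R (Fin l) := huAeq ▸ huAmem
    have hH : Hyp R Aunit ∈ EpS R (Fin l) Set.univ := Hyp_mem Aunit hAmem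
    set S := Aᵀ * C with hSdef
    have hST : Sᵀ = S := by
      rw [hSdef, Matrix.transpose_mul, Matrix.transpose_transpose, ← hCA]
    obtain ⟨u2, hu2mem, hu2val⟩ :=
      lowerS_mem (R := R)
        ((Finset.univ.filter (fun p : Fin l × Fin l => S p.1 p.2 ≠ 0)).card)
        S hST le_rfl
    refine ⟨Hyp R Aunit * u2, mul_mem hH hu2mem, ?_⟩
    rw [Units.val_mul, hu2val]
    show fromBlocks A 0 0 (Dᵀᵀ) * fromBlocks 1 0 S 1 = x
    rw [Matrix.transpose_transpose, Matrix.fromBlocks_multiply, hx]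
    simp only [Matrix.mul_one, Matrix.mul_zero, Matrix.zero_mul, Matrix.one_mul,
      add_zero, zero_add, mul_one, mul_zero, zero_mul, one_mul]
    have hDAt : D * Aᵀ = 1 := by
      have h := congrArg Matrix.transpose hAD
      simpa [Matrix.transpose_mul] using h
    rw [hSdef, ← mul_assoc, hDAt, one_mul]
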